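/- Let R be a proto-ranking on a finite set X and A ⊆ X a set such that for all x,y ∈ A with x R y, the R-order interval [x,y]_R is contained in A. Then the binary relation R ∪ (A × A) admits a complete and transitive extension. -/
import Mathlib


variable {X : Type*}

def Tournament (W : X → X → Prop) : Prop :=
  (∀ x y : X, x ≠ y → W x y ∨ W y x) ∧ (∀ x y : X, W x y → ¬ W y x)

def Ranking (R : X → X → Prop) : Prop :=
  (∀ x : X, ¬ R x x) ∧ (∀ x y z : X, R x y → R y z → R x z) ∧
    (∀ x y : X, x ≠ y → R x y ∨ R y x)

def ProtoRanking (R : X → X → Prop) : Prop :=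
  (∀ x : X, ¬ R x x) ∧ (∀ x y z : X, R x y → R y z → R x z)

def Adjacent (R : X → X → Prop) (x y : X) : Prop :=
  R x y ∧ ¬ ∃ z : X, R x z ∧ R z y

def Feasible (W R : X → X → Prop) : Prop :=
  ∀ x y : X, Adjacent R x y → W x y

def Efficient (succ W R : X → X → Prop) : Prop :=
  ∀ x y : X, succ x y → W x y → R x y

def MoreAligned (succ R R' : X → X → Prop) : Prop :=
  ∀ x y : X, succ x y → R' x y → R x y

def StrictPart (Q : X → X → Prop) (a b : X) : Prop := Q a b ∧ ¬ Q b a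

def HasCompleteTransitiveExtension (Q : X → X → Prop) : Prop :=
  ∃ Q' : X → X → Prop,
    (∀ a : X, Q' a a) ∧ (∀ a b : X, a ≠ b → Q' a b ∨ Q' b a) ∧
    (∀ a b c : X, Q' a b → Q' b c → Q' a c) ∧
    (∀ a b : X, Q a b → Q' a b) ∧
    (∀ a b : X, StrictPart Q a b → StrictPart Q' a b)

/-- The extension lemma. -/
theorem stmt7 [Fintype X] (R : X → X → Prop) (hR : ProtoRanking R) (A : Set X)
    (hA : ∀ x ∈ A, ∀ y ∈ A, R x y → ∀ c : X, R x c → R c y → c ∈ A) :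
    HasCompleteTransitiveExtension (fun a b => R a b ∨ (a ∈ A ∧ b ∈ A)) := by
  classical
  obtain ⟨hirr, htr⟩ := hR
  set Q : X → X → Prop := fun a b => R a b ∨ (a ∈ A ∧ b ∈ A) with hQdef
  set T : X → X → Prop := Relation.TransGen Q with hTdef
  have reach : ∀ b a, T b a →
      R b a ∨ ((b ∈ A ∨ ∃ p ∈ A, R b p) ∧ (a ∈ A ∨ ∃ q ∈ A, R q a)) := by
    intro b a h
    induction h with
    | single h =>
      rcases h with h | ⟨hb, ha⟩
      · exact Or.inl h
      · exact Or.inr ⟨Or.inl hb, Or.inl ha⟩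
    | tail hbc hca ih =>
      rename_i c a
      rcases hca with hca | ⟨hc, ha⟩
      · rcases ih with hbc' | ⟨hb, hc⟩
        · exact Or.inl (htr _ _ _ hbc' hca)
        · refine Or.inr ⟨hb, ?_⟩
          rcases hc with hc | ⟨q, hq, hqc⟩
          · exact Or.inr ⟨c, hc, hca⟩
          · exact Or.inr ⟨q, hq, htr _ _ _ hqc hca⟩
      · rcases ih with hbc' | ⟨hb, _⟩
        · exact Or.inr ⟨Or.inr ⟨c, hc, hbc'⟩, Or.inl ha⟩
        · exact Or.inr ⟨hb, Or.inl ha⟩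
  have key : ∀ a b, R a b → ¬ (a ∈ A ∧ b ∈ A) → ¬ T b a := by
    intro a b hab hnA hT
    rcases reach b a hT with h | ⟨hb, ha⟩
    · exact hirr a (htr _ _ _ hab h)
    · rcases hb with hb | ⟨p, hp, hbp⟩
      · rcases ha with ha | ⟨q, hq, hqa⟩
        · exact hnA ⟨ha, hb⟩
        · -- q ∈ A, R q a, b ∈ A : a ∈ [q,b]
          have hqb : R q b := htr _ _ _ hqa hab
          exact hnA ⟨hA q hq b hb hqb a hqa hab, hb⟩
      · rcases ha with ha | ⟨q, hq, hqa⟩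
        · -- a ∈ A, p ∈ A, R a p, b in interval
          have hap : R a p := htr _ _ _ hab hbp
          exact hnA ⟨ha, hA a ha p hp hap b hab hbp⟩
        · -- q ∈ A, p ∈ A, R q p, a and b in interval
          have hqa' : R q b := htr _ _ _ hqa hab
          have hqp : R q p := htr _ _ _ hqa' hbp
          have haA : a ∈ A := hA q hq p hp hqp a hqa (htr _ _ _ hab hbp)
          have hbA : b ∈ A := hA q hq p hp hqp b hqa' hbp
          exact hnA ⟨haA, hbA⟩
  set f : X → ℕ := fun x => Set.ncard {y | T y x ∧ ¬ T x y} with hfdef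
  have hsub : ∀ a b, T a b → {y | T y a ∧ ¬ T a y} ⊆ {y | T y b ∧ ¬ T b y} := by
    intro a b hab y ⟨hya, hay⟩
    refine ⟨hya.trans hab, fun hby => hay (hab.trans hby)⟩
  have hmono : ∀ a b, T a b → f a ≤ f b := fun a b h =>
    Set.ncard_le_ncard (hsub a b h) (Set.toFinite _)
  have hstrict : ∀ a b, T a b → ¬ T b a → f a < f b := by
    intro a b hab hba
    apply Set.ncard_lt_ncard _ (Set.toFinite _)
    refine ⟨hsub a b hab, fun hss => ?_⟩
    have : a ∈ {y | T y a ∧ ¬ T a y} := hss ⟨hab, hba⟩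
    exact this.2 this.1
  refine ⟨fun a b => f a ≤ f b, fun a => le_refl _, fun a b _ => le_total _ _,
    fun a b c => le_trans, ?_, ?_⟩
  · intro a b h
    exact hmono a b (Relation.TransGen.single h)
  · rintro a b ⟨hab, hnba⟩
    have hnA : ¬ (a ∈ A ∧ b ∈ A) := fun h => hnba (Or.inr ⟨h.2, h.1⟩)
    have hRab : R a b := by
      rcases hab with h | h
      · exact h
      · exact absurd h hnA
    have hlt := hstrict a b (Relation.TransGen.single hab) (key a b hRab hnA)
    exact ⟨le_of_lt hlt, not_le.mpr hlt⟩
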